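/- Let 𝒢ᶜ: 𝒢 → Mon be the conjugation action of a groupoid 𝒢 on its own isotropy groups. For objects θ: X → 𝒢ᶜ and τ: Y → 𝒢ᶜ of Set^𝒢 / 𝒢ᶜ, the maps η_G: X(G) × Y(G) → Y(G) × X(G), (x,y) ↦ (Y(θ_G(x))(y), x), assemble into a natural isomorphism X ⊗ Y ≅ Y ⊗ X of objects over 𝒢ᶜ, with inverse (y,x) ↦ (x, Y(θ_G(x)⁻¹)(y)). -/

import Mathlib

open CategoryTheory

universe v u

section GSets
variable {G : Type u} [Groupoid.{v} G]

/-- Pointwise product of `𝒢`-sets. -/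
@[simps] def prodF (X Y : G ⥤ FintypeCat.{v}) : G ⥤ FintypeCat.{v} where
  obj g := FintypeCat.of (X.obj g × Y.obj g)
  map h := FintypeCat.homMk fun p => (X.map h p.1, Y.map h p.2)
  map_id g := by ext p <;> simp <;> rfl
  map_comp f h := by ext p <;> simp <;> rfl

/-- Pointwise coproduct (disjoint union) of `𝒢`-sets. -/
@[simps] def coprodF (X Y : G ⥤ FintypeCat.{v}) : G ⥤ FintypeCat.{v} where
  obj g := FintypeCat.of (X.obj g ⊕ Y.obj g)
  map h := FintypeCat.homMk fun p => Sum.map (X.map h) (Y.map h) p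
  map_id g := by ext p; cases p <;> simp <;> rfl
  map_comp f h := by ext p; cases p <;> simp <;> rfl

/-- The terminal `𝒢`-set. -/
def termF : G ⥤ FintypeCat.{v} := (Functor.const G).obj (FintypeCat.of PUnit)

end GSets

section Tensor
variable {G : Type u} [Groupoid.{v} G]
variable (Sb : G ⥤ FintypeCat.{v}) [∀ g : G, Monoid (Sb.obj g)]

/-- The tensor product of two crossed `𝒢`-sets over the `𝒢`-monoid with underlying
`𝒢`-set `Sb`: the underlying `𝒢`-set is the pointwise product, and the structure map
is `(x, y) ↦ θ(x) · τ(y)`. -/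
def tensorOver
    (hmul : ∀ ⦃x y : G⦄ (h : x ⟶ y) (a b : Sb.obj x), Sb.map h (a * b) = Sb.map h a * Sb.map h b)
    (u v : Over Sb) : Over Sb :=
  Over.mk (Y := prodF u.left v.left)
    { app := fun g => FintypeCat.homMk fun p =>
        (show Sb.obj g from u.hom.app g p.1) * (show Sb.obj g from v.hom.app g p.2)
      naturality := by
        intro x y f
        ext p
        have hu : (show Sb.obj y from u.hom.app y (u.left.map f p.1)) =
            Sb.map f (show Sb.obj x from u.hom.app x p.1) :=
          ConcreteCategory.congr_hom (u.hom.naturality f) p.1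
        have hv : (show Sb.obj y from v.hom.app y (v.left.map f p.2)) =
            Sb.map f (show Sb.obj x from v.hom.app x p.2) :=
          ConcreteCategory.congr_hom (v.hom.naturality f) p.2
        exact (congrArg₂ (· * ·) hu hv).trans (hmul f _ _).symm }

/-- The unit object: the terminal `𝒢`-set mapping to the identity elements of the
`𝒢`-monoid. -/
def unitOver
    (hone : ∀ ⦃x y : G⦄ (h : x ⟶ y), Sb.map h (1 : Sb.obj x) = 1) : Over Sb :=
  Over.mk (Y := termF)
    { app := fun g => FintypeCat.homMk fun _ => (1 : Sb.obj g)
      naturality := by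
        intro x y f
        ext p
        exact (hone f).symm }

/-- Coproducts in the category of crossed `𝒢`-sets. -/
def coprodOver (u v : Over Sb) : Over Sb :=
  Over.mk (Y := coprodF u.left v.left)
    { app := fun g => FintypeCat.homMk fun p => Sum.elim (u.hom.app g) (v.hom.app g) p
      naturality := by intro x y f; ext p; cases p with
        | inl a => exact ConcreteCategory.congr_hom (u.hom.naturality f) a
        | inr b => exact ConcreteCategory.congr_hom (v.hom.naturality f) b }

end Tensor

section Conj
variable (G : Type u) [Groupoid.{v} G] [∀ x y : G, Fintype (x ⟶ y)]

/-- The underlying `𝒢`-set of the conjugation action `𝒢ᶜ : 𝒢 ⥤ Mon`, sending an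
object to its isotropy group and a morphism `g` to conjugation by `g`. -/
@[simps] def GcBar : G ⥤ FintypeCat.{v} where
  obj x := FintypeCat.of (x ⟶ x)
  map g := FintypeCat.homMk fun n => Groupoid.inv g ≫ n ≫ g
  map_id x := by ext n; change Groupoid.inv (𝟙 x) ≫ n ≫ 𝟙 x = n; simp
  map_comp f h := by
    ext n
    change Groupoid.inv (f ≫ h) ≫ n ≫ f ≫ h = Groupoid.inv h ≫ (Groupoid.inv f ≫ n ≫ f) ≫ h
    simp [Groupoid.inv_eq_inv]

/-- The monoid structure on the isotropy group `𝒢ₓ`, with multiplication written in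
function-composition order as in the paper (`(g·h) = g ∘ h`). -/
instance (x : G) : Monoid ((GcBar G).obj x) := inferInstanceAs (Monoid (End x))

lemma GcBar_map_mul : ∀ ⦃x y : G⦄ (h : x ⟶ y) (a b : (GcBar G).obj x),
    (GcBar G).map h (a * b) = (GcBar G).map h a * (GcBar G).map h b := by
  intro x y h (a : x ⟶ x) (b : x ⟶ x)
  show Groupoid.inv h ≫ (b ≫ a) ≫ h = (Groupoid.inv h ≫ b ≫ h) ≫ Groupoid.inv h ≫ a ≫ h
  simp [Groupoid.inv_eq_inv]

lemma GcBar_map_one : ∀ ⦃x y : G⦄ (h : x ⟶ y),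
    (GcBar G).map h (1 : (GcBar G).obj x) = 1 := by
  intro x y h
  show Groupoid.inv h ≫ 𝟙 x ≫ h = 𝟙 y
  simp

end Conj

/-!
The braiding is the twisted swap `(x, y) ↦ (θ(x) · y, x)`. It is natural because `θ` is
equivariant for conjugation, and it lies over `𝒢ᶜ` because equivariance of `τ` along `θ(x)`
gives `τ(θ(x) · y) = θ(x) τ(y) θ(x)⁻¹`, so that `θ(x) τ(y) = τ(θ(x) · y) θ(x)`.
-/

section Braiding
variable {G : Type u} [Groupoid.{v} G]

lemma map_conj_map_apply (F : G ⥤ FintypeCat) {x y : G} (f : x ⟶ y) (c : x ⟶ x)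
    (b : F.obj x) : F.map (Groupoid.inv f ≫ c ≫ f) (F.map f b) = F.map f (F.map c b) := by
  simp

variable [∀ x y : G, Fintype (x ⟶ y)]

def isotropyElt (u : Over (GcBar G)) {g : G} (a : u.left.obj g) : g ⟶ g := u.hom.app g a

lemma isotropyElt_map (u : Over (GcBar G)) {x y : G} (f : x ⟶ y) (a : u.left.obj x) :
    isotropyElt u (u.left.map f a) = Groupoid.inv f ≫ isotropyElt u a ≫ f :=
  FunctorToFintypeCat.naturality _ _ u.hom f a

def braidingEquiv (u v : Over (GcBar G)) (g : G) :
    u.left.obj g × v.left.obj g ≃ v.left.obj g × u.left.obj g where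
  toFun p := (v.left.map (isotropyElt u p.1) p.2, p.1)
  invFun q := (q.2, v.left.map (Groupoid.inv (isotropyElt u q.2)) q.1)
  left_inv p := by simp
  right_inv q := by simp

def conjBraiding (u v : Over (GcBar G)) :
    tensorOver (GcBar G) (GcBar_map_mul G) u v ≅ tensorOver (GcBar G) (GcBar_map_mul G) v u :=
  Over.isoMk
    (NatIso.ofComponents (fun g => FintypeCat.equivEquivIso (braidingEquiv u v g)) fun f => by
      ext ⟨a, b⟩
      change (v.left.map (isotropyElt u (u.left.map f a)) (v.left.map f b), u.left.map f a) =
        (v.left.map f (v.left.map (isotropyElt u a) b), u.left.map f a)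
      rw [isotropyElt_map, map_conj_map_apply])
    (by
      ext g ⟨a, b⟩
      change isotropyElt u a ≫ isotropyElt v (v.left.map (isotropyElt u a) b) =
        isotropyElt v b ≫ isotropyElt u a
      rw [isotropyElt_map]
      simp)

end Braiding

/-- Let `𝒢ᶜ : 𝒢 → Mon` be the conjugation action of a groupoid `𝒢` on its own isotropy
groups.  For crossed `𝒢`-sets `θ : X → 𝒢ᶜ` and `τ : Y → 𝒢ᶜ`, the maps
`η_G : X(G) × Y(G) → Y(G) × X(G)`, `(x, y) ↦ (Y(θ_G(x))(y), x)` assemble into an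
isomorphism `X ⊗ Y ≅ Y ⊗ X` of crossed `𝒢`-sets over `𝒢ᶜ`, with inverse
`(y, x) ↦ (x, Y(θ_G(x)⁻¹)(y))`. -/
theorem braiding_iso_over_conjugation (G : Type u) [Groupoid.{v} G]
    [∀ x y : G, Fintype (x ⟶ y)] (u v : Over (GcBar G)) :
    ∃ e : tensorOver (GcBar G) (GcBar_map_mul G) u v ≅
          tensorOver (GcBar G) (GcBar_map_mul G) v u,
      (∀ (g : G) (p : u.left.obj g × v.left.obj g),
        (show ((prodF v.left u.left).obj g : Type v) from
            e.hom.left.app g (show ((prodF u.left v.left).obj g : Type v) from p)) =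
          (v.left.map (show g ⟶ g from u.hom.app g p.1) p.2, p.1)) ∧
      (∀ (g : G) (q : v.left.obj g × u.left.obj g),
        (show ((prodF u.left v.left).obj g : Type v) from
            e.inv.left.app g (show ((prodF v.left u.left).obj g : Type v) from q)) =
          (q.2, v.left.map (Groupoid.inv (show g ⟶ g from u.hom.app g q.2)) q.1)) :=
  ⟨conjBraiding u v, fun _ _ => rfl, fun _ _ => rfl⟩
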